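/- For every right-infinite binary word x, the word 001μ³(x) is 7/3-power-free if and only if 1μ(x) is 7/3-power-free. -/
import Mathlib


/-- Thue–Morse morphism on finite binary words: 0 ↦ 01, 1 ↦ 10 (0 = false, 1 = true). -/
def mu (w : List Bool) : List Bool := w.flatMap (fun b => [b, !b])

/-- Thue–Morse morphism on right-infinite binary words. -/
def muI (x : ℕ → Bool) : ℕ → Bool := fun n => if n % 2 = 0 then x (n / 2) else !(x (n / 2))

/-- Prepend a finite word to an infinite word. -/
def appendInf (u : List Bool) (x : ℕ → Bool) : ℕ → Bool :=
  fun n => if h : n < u.length then u.get ⟨n, h⟩ else x (n - u.length)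

/-- `w` is a prefix of the infinite word `x`. -/
def InfPrefix (w : List Bool) (x : ℕ → Bool) : Prop :=
  ∀ i (h : i < w.length), w.get ⟨i, h⟩ = x i

/-- The finite word `w` is `p`-periodic. -/
def ListPeriodic (w : List Bool) (p : ℕ) : Prop :=
  ∀ i, i + p < w.length → w.getD i false = w.getD (i + p) false

/-- `w` occurs as a factor of the infinite word `x`. -/
def IsFactor (x : ℕ → Bool) (w : List Bool) : Prop :=
  ∃ i, ∀ k (h : k < w.length), w.get ⟨k, h⟩ = x (i + k)

/-- `w` has exponent ≥ β : it has a period `p ≥ 1` with `|w| ≥ β·p`. -/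
def HasExpGE (w : List Bool) (β : ℚ) : Prop :=
  ∃ p, 1 ≤ p ∧ ListPeriodic w p ∧ β * p ≤ (w.length : ℚ)

/-- `w` has exponent > β. -/
def HasExpGT (w : List Bool) (β : ℚ) : Prop :=
  ∃ p, 1 ≤ p ∧ ListPeriodic w p ∧ β * p < (w.length : ℚ)

/-- The infinite word `x` is β-power-free: no factor has exponent ≥ β. -/
def FreeI (x : ℕ → Bool) (β : ℚ) : Prop := ∀ w, IsFactor x w → ¬ HasExpGE w β

/-- The infinite word `x` is β⁺-power-free: no factor has exponent > β. -/
def FreePlusI (x : ℕ → Bool) (β : ℚ) : Prop := ∀ w, IsFactor x w → ¬ HasExpGT w β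

/-- The finite word `x` is β-power-free. -/
def FreeL (x : List Bool) (β : ℚ) : Prop := ∀ w, w <:+: x → ¬ HasExpGE w β

/-- The finite word `x` is β⁺-power-free. -/
def FreeLPlus (x : List Bool) (β : ℚ) : Prop := ∀ w, w <:+: x → ¬ HasExpGT w β

/-- The infinite word `x` is 7/3-power-free. -/
def Free73 (x : ℕ → Bool) : Prop := FreeI x (7/3)

/-- The prefix of length `n` of the infinite word `x` is `p`-periodic. -/
def PrefPeriodic (x : ℕ → Bool) (p n : ℕ) : Prop := ∀ i, i + p < n → x i = x (i + p)

/-- The set {ε, 0, 00, 1, 11}. -/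
def P5 : Set (List Bool) :=
  {[], [false], [false, false], [true], [true, true]}

/-- Thue–Morse word: parity of the number of ones in base 2. -/
def tmWord (n : ℕ) : Bool := (Nat.digits 2 n).sum % 2 == 1

/-- Lexicographic order (0 < 1) on infinite binary words. -/
def LexLE (u v : ℕ → Bool) : Prop :=
  u = v ∨ ∃ n, (∀ k < n, u k = v k) ∧ u n = false ∧ v n = true

/-- The 2-kernel of an infinite word. -/
def Kernel2 (x : ℕ → Bool) : Set (ℕ → Bool) :=
  {y | ∃ i j, j < 2 ^ i ∧ y = fun n => x (2 ^ i * n + j)}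

/-- An infinite word is 2-automatic iff its 2-kernel is finite. -/
def TwoAutomatic (x : ℕ → Bool) : Prop := (Kernel2 x).Finite

/- ============ auxiliary development ============ -/

def perW (y : ℕ → Bool) (i L p : ℕ) : Prop := ∀ k, k + p < L → y (i + k) = y (i + k + p)

def Pow73 (y : ℕ → Bool) : Prop := ∃ i L p, 1 ≤ p ∧ perW y i L p ∧ 7 * p ≤ 3 * L

lemma muI_even (y : ℕ → Bool) (m : ℕ) : muI y (2 * m) = y m := by
  have h1 : (2 * m) % 2 = 0 := by omega
  have h2 : (2 * m) / 2 = m := by omega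
  simp [muI, h1, h2]

lemma muI_odd (y : ℕ → Bool) (m : ℕ) : muI y (2 * m + 1) = !(y m) := by
  have h1 : ¬ ((2 * m + 1) % 2 = 0) := by omega
  have h2 : (2 * m + 1) / 2 = m := by omega
  simp [muI, h1, h2]

lemma perW_transfer {y z : ℕ → Bool} {i j L p : ℕ} (h : perW y i L p)
    (he : ∀ k, k < L → z (j + k) = y (i + k)) : perW z j L p := by
  intro k hk
  rw [he k (by omega), show j + k + p = j + (k + p) by omega, he (k+p) (by omega),
    show i + (k + p) = i + k + p by omega]
  exact h k hk

lemma perW_mu {y : ℕ → Bool} {i L p : ℕ} (h : perW y i L p) :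
    perW (muI y) (2 * i) (2 * L) (2 * p) := by
  intro k hk
  rcases Nat.even_or_odd k with ⟨m, hm⟩ | ⟨m, hm⟩
  · rw [show 2 * i + k = 2 * (i + m) by omega]
    rw [show 2 * (i + m) + 2 * p = 2 * (i + m + p) by omega]
    rw [muI_even, muI_even]
    exact h m (by omega)
  · rw [show 2 * i + k = 2 * (i + m) + 1 by omega]
    rw [show 2 * (i + m) + 1 + 2 * p = 2 * (i + m + p) + 1 by omega]
    rw [muI_odd, muI_odd, h m (by omega)]

/-- no factor of a μ-image has odd period p and length ≥ 2p+1 -/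
lemma perW_odd_false {y : ℕ → Bool} {i L p : ℕ} (hp : p % 2 = 1) (hL : 2 * p + 1 ≤ L)
    (h : perW (muI y) i L p) : False := by
  have evenAlt : ∀ j : ℕ, j % 2 = 0 → muI y (j + 1) = !(muI y j) := by
    intro j hj
    have h1 : ¬ ((j + 1) % 2 = 0) := by omega
    have h2 : (j + 1) / 2 = j / 2 := by omega
    simp [muI, hj, h1, h2]
  have alt : ∀ t, t + 1 < L → muI y (i + t + 1) = !(muI y (i + t)) := by
    intro t ht
    by_cases hpar : (i + t) % 2 = 0
    · exact evenAlt _ hpar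
    · by_cases hcase : t + p + 1 < L
      · have e1 := h t (by omega)
        have e2 := h (t + 1) (by omega)
        have e3 := evenAlt (i + t + p) (by omega)
        rw [show i + (t+1) + p = i + t + p + 1 by omega, show i + (t+1) = i + t + 1 by omega] at e2
        rw [e1, e2, e3]
      · have htp : p ≤ t := by omega
        have e1 := h (t - p) (by omega)
        have e2 := h (t - p + 1) (by omega)
        have e3 := evenAlt (i + (t - p)) (by omega)
        rw [show i + (t - p) + p = i + t by omega] at e1
        rw [show i + (t - p + 1) + p = i + t + 1 by omega,
            show i + (t - p + 1) = i + (t - p) + 1 by omega] at e2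
        rw [← e1, ← e2, e3]
  have full : ∀ t, t < L → muI y (i + t) = (if t % 2 = 0 then muI y i else !(muI y i)) := by
    intro t
    induction t with
    | zero => intro _; simp
    | succ n ih =>
      intro hn
      have h1 := alt n (by omega)
      have h2 := ih (by omega)
      rw [show i + (n+1) = i + n + 1 by omega, h1, h2]
      rcases Nat.even_or_odd n with ⟨m, hm⟩ | ⟨m, hm⟩
      · have hm1 : n % 2 = 0 := by omega
        have hm2 : ¬ ((n+1) % 2 = 0) := by omega
        simp [hm1, hm2]
      · have hm1 : ¬ (n % 2 = 0) := by omega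
        have hm2 : (n+1) % 2 = 0 := by omega
        simp [hm1, hm2]
  have e0 := h 0 (by omega)
  have e1 := full p (by omega)
  rw [show i + 0 + p = i + p by omega, show i + 0 = i by omega] at e0
  rw [e1, if_neg (by omega)] at e0
  simp at e0

/-- de-substitution for even periods -/
lemma perW_desub {y : ℕ → Bool} {i L r : ℕ} (hL : 2 * r < L)
    (h : perW (muI y) i L (2 * r)) :
    perW y (i / 2) ((i + L - 1) / 2 - i / 2 + 1) r := by
  intro k hk
  have hb : i / 2 + (k + r) ≤ (i + L - 1) / 2 := by omega
  by_cases hcase : i ≤ 2 * (i / 2 + k)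
  · have hlt : (2 * (i / 2 + k) - i) + 2 * r < L := by omega
    have e := h (2 * (i / 2 + k) - i) hlt
    rw [show i + (2 * (i / 2 + k) - i) + 2 * r = 2 * (i / 2 + k + r) by omega,
        show i + (2 * (i / 2 + k) - i) = 2 * (i / 2 + k) by omega,
        muI_even, muI_even] at e
    exact e
  · have hk0 : k = 0 := by omega
    have e := h 0 (by omega : 0 + 2 * r < L)
    rw [show i + 0 + 2 * r = 2 * (i / 2 + r) + 1 by omega,
        show i + 0 = 2 * (i / 2) + 1 by omega,
        muI_odd, muI_odd] at e
    subst hk0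
    simpa using e

lemma pow_mu_down {y : ℕ → Bool} : Pow73 (muI y) → Pow73 y := by
  rintro ⟨i, L, p, hp, hper, hexp⟩
  rcases Nat.even_or_odd p with ⟨r, hr⟩ | ⟨r, hr⟩
  · have hL : 2 * r < L := by omega
    have hper' := perW_desub hL (by rw [show 2 * r = p by omega]; exact hper)
    exact ⟨i / 2, (i + L - 1) / 2 - i / 2 + 1, r, by omega, hper', by omega⟩
  · exact ((perW_odd_false (by omega) (by omega) hper)).elim

/- appendInf computation lemmas -/
lemma apCons (c : Bool) (u : List Bool) (z : ℕ → Bool) (n : ℕ) :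
    appendInf (c :: u) z (n + 1) = appendInf u z n := by
  unfold appendInf
  by_cases h : n < u.length
  · rw [dif_pos (by simpa using Nat.succ_lt_succ h), dif_pos h]
    simp
  · rw [dif_neg (by simp; omega), dif_neg h]
    congr 1
    simp only [List.length_cons]
    omega

lemma apZero (c : Bool) (u : List Bool) (z : ℕ → Bool) :
    appendInf (c :: u) z 0 = c := by
  unfold appendInf
  rw [dif_pos (by simp)]
  simp

lemma apNil (z : ℕ → Bool) (n : ℕ) : appendInf [] z n = z n := by
  simp [appendInf]

lemma apOne (z : ℕ → Bool) (n : ℕ) : appendInf [true] z (n + 1) = z n := by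
  rw [apCons, apNil]

lemma ap3 (z : ℕ → Bool) (n : ℕ) : appendInf [false, false, true] z (n + 3) = z n := by
  rw [show n + 3 = (n + 2) + 1 by omega, apCons, show n + 2 = (n+1) + 1 by omega,
    apCons, apCons, apNil]

lemma muI_ap_one (z : ℕ → Bool) :
    muI (appendInf [true] z) = appendInf [true, false] (muI z) := by
  funext n
  match n with
  | 0 => simp [muI, apZero]
  | 1 =>
      have h1 : ¬ ((1:ℕ) % 2 = 0) := by omega
      rw [show (1:ℕ) = 0 + 1 from rfl, apCons, apZero]
      simp [muI, h1, apZero]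
  | (n+2) =>
      have h1 : (n + 2) % 2 = n % 2 := by omega
      have h2 : (n + 2) / 2 = n / 2 + 1 := by omega
      rw [show n + 2 = (n + 1) + 1 by omega, apCons, apCons, apNil]
      unfold muI
      rw [show (n + 1) + 1 = n + 2 by omega, h1, h2, apOne]

lemma muI_ap_two (z : ℕ → Bool) :
    muI (appendInf [true, false] z) = appendInf [true, false, false, true] (muI z) := by
  funext n
  match n with
  | 0 => simp [muI, apZero]
  | 1 =>
      have h1 : ¬ ((1:ℕ) % 2 = 0) := by omega
      rw [show (1:ℕ) = 0 + 1 from rfl, apCons, apZero]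
      simp [muI, h1, apZero]
  | 2 =>
      have h1 : (2:ℕ) % 2 = 0 := by omega
      have h2 : (2:ℕ) / 2 = 1 := by omega
      rw [show (2:ℕ) = 1 + 1 from rfl, apCons, apCons, apZero]
      unfold muI
      rw [h1, h2, show (1:ℕ) = 0 + 1 from rfl, apCons, apZero]
      simp
  | 3 =>
      have h1 : ¬ ((3:ℕ) % 2 = 0) := by omega
      have h2 : (3:ℕ) / 2 = 1 := by omega
      rw [show (3:ℕ) = 2 + 1 from rfl, apCons, show (2:ℕ) = 1 + 1 from rfl, apCons,
        show (1:ℕ) = 0 + 1 from rfl, apCons, apZero]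
      unfold muI
      rw [if_neg h1, h2, show (1:ℕ) = 0 + 1 from rfl, apCons, apZero]
      simp
  | (n+4) =>
      have h1 : (n + 4) % 2 = n % 2 := by omega
      have h2 : (n + 4) / 2 = n / 2 + 2 := by omega
      rw [show n + 4 = ((n + 3)) + 1 by omega, apCons, show n + 3 = (n + 2) + 1 by omega,
        apCons, show n + 2 = (n + 1) + 1 by omega, apCons, apCons, apNil]
      unfold muI
      rw [show ((n+1)+1)+1+1 = n + 4 by omega, h1, h2,
        show n / 2 + 2 = (n / 2 + 1) + 1 by omega, apCons,
        show appendInf [false] z (n / 2 + 1) = z (n / 2) from by rw [apCons, apNil]]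

/- bridge between Free73 and Pow73 -/
lemma free_iff_pow (y : ℕ → Bool) : Free73 y ↔ ¬ Pow73 y := by
  unfold Free73 FreeI Pow73 IsFactor HasExpGE ListPeriodic perW
  constructor
  · rintro hf ⟨i, L, p, hp, hper, hexp⟩
    set w : List Bool := (List.range L).map (fun k => y (i + k)) with hw
    have hlen : w.length = L := by simp [hw]
    have hget : ∀ k (h : k < w.length), w.get ⟨k, h⟩ = y (i + k) := by
      intro k h
      simp [hw]
    refine hf w ⟨i, hget⟩ ⟨p, hp, ?_, ?_⟩
    · intro j hj
      have e1 : w.getD j false = y (i + j) := by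
        rw [List.getD_eq_getElem w false (by omega)]
        exact hget j (by omega)
      have e2 : w.getD (j + p) false = y (i + j + p) := by
        rw [List.getD_eq_getElem w false (by omega)]
        rw [show w[j + p] = w.get ⟨j + p, by omega⟩ from rfl, hget (j + p) (by omega),
          show i + (j + p) = i + j + p by omega]
      rw [e1, e2]
      exact hper j (by omega)
    · rw [hlen]
      rw [div_mul_eq_mul_div, div_le_iff₀ (by norm_num : (0:ℚ) < 3)]
      have hc : (7 * p : ℚ) ≤ 3 * L := by exact_mod_cast hexp
      linarith
  · rintro hnp w ⟨i, hget⟩ ⟨p, hp, hper, hexp⟩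
    refine hnp ⟨i, w.length, p, hp, ?_, ?_⟩
    · intro k hk
      have e1 : w.getD k false = y (i + k) := by
        rw [List.getD_eq_getElem w false (by omega)]
        exact hget k (by omega)
      have e2 : w.getD (k + p) false = y (i + k + p) := by
        rw [List.getD_eq_getElem w false (by omega)]
        rw [show w[k + p] = w.get ⟨k + p, by omega⟩ from rfl, hget (k + p) (by omega),
          show i + (k + p) = i + k + p by omega]
      rw [← e1, ← e2]
      exact hper k hk
    · have h3 : ((7:ℚ)/3) * p ≤ (w.length : ℚ) := hexp
      rw [div_mul_eq_mul_div, div_le_iff₀ (by norm_num : (0:ℚ) < 3)] at h3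
      have hc : 7 * p ≤ w.length * 3 := by exact_mod_cast h3
      omega

theorem stmt12 (x : ℕ → Bool) :
    Free73 (appendInf [false, false, true] (muI (muI (muI x)))) ↔
    Free73 (appendInf [true] (muI x)) := by
  rw [free_iff_pow, free_iff_pow]
  set A := appendInf [true] (muI x) with hA
  set T := appendInf [false, false, true] (muI (muI (muI x))) with hT
  have hYA : muI (muI A) = appendInf [true, false, false, true] (muI (muI (muI x))) := by
    rw [hA, muI_ap_one, muI_ap_two]
  have hTY : ∀ n, T n = muI (muI A) (n + 1) := by
    intro n
    rw [hYA, apCons, hT]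
  suffices hiff : Pow73 T ↔ Pow73 A by rw [not_iff_not]; exact hiff
  constructor
  · -- Pow73 T → Pow73 A
    rintro ⟨i, L, p, hp, hper, hexp⟩
    have hper2 : perW (muI (muI A)) (i + 1) L p := by
      refine perW_transfer hper ?_
      intro k _
      rw [show i + 1 + k = (i + k) + 1 by omega, ← hTY (i + k)]
    exact pow_mu_down (pow_mu_down ⟨i + 1, L, p, hp, hper2, hexp⟩)
  · -- Pow73 A → Pow73 T
    rintro ⟨i, L, p, hp, hper, hexp⟩
    match i with
    | (j + 1) =>
      have hper1 : perW (muI x) j L p := by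
        refine perW_transfer hper ?_
        intro k _
        rw [show j + 1 + k = (j + k) + 1 by omega, hA, apOne]
      have hper2 := perW_mu (perW_mu hper1)
      have hper3 : perW T (3 + 2 * (2 * j)) (2 * (2 * L)) (2 * (2 * p)) := by
        refine perW_transfer hper2 ?_
        intro k _
        rw [hT, show 3 + 2 * (2 * j) + k = (2 * (2 * j) + k) + 3 by omega, ap3]
      exact ⟨3 + 2 * (2 * j), 2 * (2 * L), 2 * (2 * p), by omega, hper3, by omega⟩
    | 0 =>
      have hperY : perW (muI (muI A)) 0 (2 * (2 * L)) (2 * (2 * p)) := by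
        have h2 := perW_mu (perW_mu hper)
        rwa [show 2 * (2 * 0) = 0 from rfl] at h2
      have hperT : perW T 0 (2 * (2 * L) - 1) (2 * (2 * p)) := by
        intro k hk
        rw [show (0:ℕ) + k + 2 * (2 * p) = k + 2 * (2 * p) by omega,
          show (0:ℕ) + k = k by omega, hTY k, hTY (k + 2 * (2 * p))]
        have h5 := hperY (k + 1) (by omega)
        rw [show (0:ℕ) + (k + 1) + 2 * (2 * p) = k + 2 * (2 * p) + 1 by omega,
          show (0:ℕ) + (k + 1) = k + 1 by omega] at h5
        exact h5
      by_cases hbig : 7 * (2 * (2 * p)) ≤ 3 * (2 * (2 * L) - 1)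
      · exact ⟨0, 2 * (2 * L) - 1, 2 * (2 * p), by omega, hperT, hbig⟩
      · have h73 : 7 * p = 3 * L := by omega
        have hperV : perW (muI x) 0 (L - 1) p := by
          intro k hk
          have h6 := hper (k + 1) (by omega)
          rw [show (0:ℕ) + (k + 1) + p = (k + p) + 1 by omega,
            show (0:ℕ) + (k + 1) = k + 1 by omega, hA, apOne, apOne] at h6
          rw [show (0:ℕ) + k + p = k + p by omega, show (0:ℕ) + k = k by omega]
          exact h6
        rcases Nat.even_or_odd p with ⟨r, hr⟩ | ⟨r, hr⟩
        · -- p even, hence 6 ∣ p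
          have hperV' : perW (muI x) 0 (L - 1) (2 * r) := by
            rw [show 2 * r = p by omega]; exact hperV
          have hper6 := perW_desub (by omega : 2 * r < L - 1) hperV'
          have hper7 := perW_mu (perW_mu (perW_mu hper6))
          have hperT2 : perW T 3 (2 * (2 * (2 * ((0 + (L - 1) - 1) / 2 - 0 / 2 + 1))))
              (2 * (2 * (2 * r))) := by
            refine perW_transfer hper7 ?_
            intro k _
            rw [hT, show 3 + k = k + 3 by omega, ap3,
              show 2 * (2 * (2 * (0 / 2))) + k = k by norm_num]
          exact ⟨3, _, 2 * (2 * (2 * r)), by omega, hperT2, by omega⟩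
        · -- p odd
          by_cases hp3 : p = 3
          · exfalso
            have hL7 : L = 7 := by omega
            have q0 := hper 0 (by omega)
            have q1 := hper 1 (by omega)
            have q2 := hper 2 (by omega)
            have q3 := hper 3 (by omega)
            have m0 : muI x 0 = x 0 := by norm_num [muI]
            have m1 : muI x 1 = !(x 0) := by norm_num [muI]
            have m2 : muI x 2 = x 1 := by norm_num [muI]
            have m3 : muI x 3 = !(x 1) := by norm_num [muI]
            have m4 : muI x 4 = x 2 := by norm_num [muI]
            have m5 : muI x 5 = !(x 2) := by norm_num [muI]
            rw [hp3] at q0 q1 q2 q3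
            rw [show (0:ℕ) + 0 + 3 = 2 + 1 by omega, show (0:ℕ) + 0 = 0 by omega,
              hA, apZero, apOne, m2] at q0
            rw [show (0:ℕ) + 1 + 3 = 3 + 1 by omega, show (0:ℕ) + 1 = 0 + 1 by omega,
              hA, apOne, apOne, m0, m3] at q1
            rw [show (0:ℕ) + 2 + 3 = 4 + 1 by omega, show (0:ℕ) + 2 = 1 + 1 by omega,
              hA, apOne, apOne, m1, m4] at q2
            rw [show (0:ℕ) + 3 + 3 = 5 + 1 by omega, show (0:ℕ) + 3 = 2 + 1 by omega,
              hA, apOne, apOne, m2, m5] at q3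
            have e1 : x 1 = true := q0.symm
            rw [e1] at q1 q3
            have e2 : x 2 = false := by simpa using q3.symm
            rw [e2] at q2
            rw [q1] at q2
            simp at q2
          · have hLL : 2 * p + 1 ≤ L - 1 := by omega
            exact ((perW_odd_false (by omega) hLL hperV)).elim
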